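/- arXiv:1512.00895 — 3 statements merged into one kernel-verified Lean document; each statement's English description precedes it below -/
import Mathlib

section
/- Let $\{a(t)\}_{t\ge 1}$ be a positive non-increasing sequence with $\sum_{t=1}^\infty a(t)^2 < \infty$, let $\lambda \in (0,1)$, and let $c(t) = \lambda^t C_0 + \sum_{s=1}^{t} \lambda^{t-s} a(s) C_1$ for constants $C_0, C_1 \ge 0$. Then $\sum_{t=0}^{\infty} a(t+1) c(t) < \infty$. -/
/-!
Writing `c` as the convolution of the geometric sequence `λᵗ` with `C₀, C₁ a 1, C₁ a 2, …`, the
claim is an instance of `‖u · (v ⋆ g)‖₁ ≤ ‖u‖₂ ‖v‖₂ ‖g‖₁`. Qualitatively this follows from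
`|u t v s g (t - s)| ≤ |g (t - s)| (u t ² + v s ²) / 2`: summing over `s`, the first half is at most
`‖g‖₁ u t ²` and the second half is the Cauchy product of `v²` and `|g|`, both summable.
-/

open Finset

theorem summable_mul_sum_range_mul {u v g : ℕ → ℝ} (hu : Summable fun t => u t ^ 2)
    (hv : Summable fun s => v s ^ 2) (hg : Summable fun k => |g k|) :
    Summable fun t => u t * ∑ s ∈ range (t + 1), v s * g (t - s) := by
  set G := ∑' k, |g k|
  have hpoint : ∀ t s, |u t * (v s * g (t - s))| ≤
      |g (t - s)| * u t ^ 2 / 2 + v s ^ 2 * |g (t - s)| / 2 := by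
    intro t s
    have hamgm :=
      mul_le_mul_of_nonneg_right (two_mul_le_add_sq |u t| |v s|) (abs_nonneg (g (t - s)))
    rw [sq_abs, sq_abs] at hamgm
    rw [abs_mul, abs_mul]
    linarith
  have hpartial : ∀ t, ∑ s ∈ range (t + 1), |g (t - s)| ≤ G := by
    intro t
    have hreflect := sum_range_reflect (fun k => |g k|) (t + 1)
    simp only [Nat.add_sub_cancel] at hreflect
    rw [hreflect]
    exact hg.sum_le_tsum _ fun k _ => abs_nonneg _
  have hconv : Summable fun t => ‖∑ s ∈ range (t + 1), v s ^ 2 * |g (t - s)|‖ :=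
    summable_norm_sum_mul_range_of_summable_norm (f := fun s => v s ^ 2) (g := fun k => |g k|)
      (by simpa only [Real.norm_eq_abs] using hv.abs)
      (by simpa only [Real.norm_eq_abs, abs_abs] using hg)
  refine Summable.of_norm_bounded ((hu.mul_left (G / 2)).add (hconv.div_const 2)) fun t => ?_
  calc ‖u t * ∑ s ∈ range (t + 1), v s * g (t - s)‖
      = |∑ s ∈ range (t + 1), u t * (v s * g (t - s))| := by rw [Real.norm_eq_abs, mul_sum]
    _ ≤ ∑ s ∈ range (t + 1), |u t * (v s * g (t - s))| := abs_sum_le_sum_abs _ _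
    _ ≤ ∑ s ∈ range (t + 1), (|g (t - s)| * u t ^ 2 / 2 + v s ^ 2 * |g (t - s)| / 2) :=
        sum_le_sum fun s _ => hpoint t s
    _ = (∑ s ∈ range (t + 1), |g (t - s)|) * u t ^ 2 / 2
          + (∑ s ∈ range (t + 1), v s ^ 2 * |g (t - s)|) / 2 := by
        rw [sum_add_distrib, ← sum_div, ← sum_div, ← sum_mul]
    _ ≤ G / 2 * u t ^ 2 + ‖∑ s ∈ range (t + 1), v s ^ 2 * |g (t - s)|‖ / 2 := by
        rw [Real.norm_eq_abs]
        have := le_abs_self (∑ s ∈ range (t + 1), v s ^ 2 * |g (t - s)|)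
        nlinarith [hpartial t, sq_nonneg (u t)]

theorem stmt_1_general (a : ℕ → ℝ)
    (hsq : Summable (fun t => (a (t + 1)) ^ 2))
    (lam : ℝ) (hlam : lam ∈ Set.Ioo (0 : ℝ) 1)
    (C₀ C₁ : ℝ)
    (c : ℕ → ℝ)
    (hc : ∀ t, c t = lam ^ t * C₀ + ∑ s ∈ Finset.Icc 1 t, lam ^ (t - s) * a s * C₁) :
    Summable (fun t => a (t + 1) * c t) := by
  obtain ⟨hlam₀, hlam₁⟩ := hlam
  set v : ℕ → ℝ := fun s => if s = 0 then C₀ else C₁ * a s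
  have hcv : ∀ t, c t = ∑ s ∈ range (t + 1), v s * lam ^ (t - s) := by
    intro t
    rw [hc, Nat.range_succ_eq_Icc_zero, Icc_eq_cons_Ioc (Nat.zero_le t), sum_cons]
    refine congrArg₂ (· + ·) (by simp [v, mul_comm]) (sum_congr rfl fun s hs => ?_)
    simp only [v, if_neg (mem_Ioc.mp hs).1.ne']
    ring
  have hv : Summable fun s => v s ^ 2 :=
    (summable_nat_add_iff 1).mp <| (hsq.mul_left (C₁ ^ 2)).congr fun s => by simp [v, mul_pow]
  have hgeom : Summable fun k => |lam ^ k| := by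
    simpa [abs_of_pos hlam₀] using summable_geometric_of_lt_one hlam₀.le hlam₁
  simpa only [hcv] using summable_mul_sum_range_mul hsq hv hgeom

theorem stmt_1 (a : ℕ → ℝ) (ha : ∀ t ≥ 1, 0 < a t)
    (hmono : ∀ s t, 1 ≤ s → s ≤ t → a t ≤ a s)
    (hsq : Summable (fun t => (a (t + 1)) ^ 2))
    (lam : ℝ) (hlam : lam ∈ Set.Ioo (0 : ℝ) 1)
    (C₀ C₁ : ℝ) (hC₀ : 0 ≤ C₀) (hC₁ : 0 ≤ C₁)
    (c : ℕ → ℝ)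
    (hc : ∀ t, c t = lam ^ t * C₀ + ∑ s ∈ Finset.Icc 1 t, lam ^ (t - s) * a s * C₁) :
    Summable (fun t => a (t + 1) * c t) :=
  stmt_1_general a hsq lam hlam C₀ C₁ c hc
end

section
/- Suppose $f: \mathbb{R}^d \to \mathbb{R}^d$ satisfies $f(x) = Hx + \delta(x)$ near $0$, where $H$ is symmetric positive definite with minimal eigenvalue $\tilde\lambda$ and $\|\delta(x)\| = o(\|x\|)$ as $x \to 0$. Then for every $a > \frac{1}{2\tilde\lambda}$ there exist a symmetric positive definite matrix $C$, constants $\beta > \frac{1}{2a}$ and $\varepsilon > 0$, such that $(Cf(x), x) \ge \beta (Cx, x)$ whenever $\|x\| < \varepsilon$. -/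
/-!
Take `C = 1`. As `H` is symmetric with spectrum bounded below by `tl`, `(Hx, x) ≥ tl (x, x)`,
while the remainder `f x - Hx = o(x)` contributes only `o((x, x))` to `(f x, x)`. Hence any `β`
strictly between `1 / (2a)` and `tl` works on a small ball, and such `β` exists precisely because
`a > 1 / (2 tl)`.
-/

open Matrix Asymptotics

section

variable {n : Type*} [Fintype n]

lemma Matrix.dotProduct_self_nonneg (x : n → ℝ) : 0 ≤ x ⬝ᵥ x :=
  dotProduct_star_self_nonneg x

lemma Matrix.norm_sq_le_dotProduct_self (x : n → ℝ) : ‖x‖ ^ 2 ≤ x ⬝ᵥ x := by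
  have hcoord (i : n) : x i ^ 2 ≤ x ⬝ᵥ x := by
    rw [sq]
    exact Finset.single_le_sum (f := fun j => x j * x j) (fun j _ => mul_self_nonneg (x j))
      (Finset.mem_univ i)
  have : ‖x‖ ≤ √(x ⬝ᵥ x) :=
    (pi_norm_le_iff_of_nonneg (Real.sqrt_nonneg _)).2 fun i => Real.abs_le_sqrt (hcoord i)
  exact (Real.le_sqrt (norm_nonneg _) (dotProduct_self_nonneg x)).1 this

lemma Matrix.abs_dotProduct_le (v w : n → ℝ) :
    |v ⬝ᵥ w| ≤ Fintype.card n * (‖v‖ * ‖w‖) :=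
  calc |∑ i, v i * w i| ≤ ∑ i, |v i * w i| := Finset.abs_sum_le_sum_abs _ _
    _ ≤ ∑ _i : n, ‖v‖ * ‖w‖ := Finset.sum_le_sum fun i _ => by
        rw [abs_mul]
        exact mul_le_mul (norm_le_pi_norm v i) (norm_le_pi_norm w i) (abs_nonneg _)
          (norm_nonneg _)
    _ = Fintype.card n * (‖v‖ * ‖w‖) := by simp

theorem Asymptotics.IsLittleO.dotProduct_self {α : Type*} {l : Filter α} {g u : α → n → ℝ}
    (h : g =o[l] u) : (fun x => g x ⬝ᵥ u x) =o[l] fun x => u x ⬝ᵥ u x := by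
  have hdot : (fun x => g x ⬝ᵥ u x) =O[l] fun x => ‖g x‖ * ‖u x‖ :=
    .of_bound (Fintype.card n) (.of_forall fun x => by
      simpa [abs_mul] using abs_dotProduct_le (g x) (u x))
  have hnorm : (fun x => ‖u x‖ * ‖u x‖) =O[l] fun x => u x ⬝ᵥ u x :=
    .of_bound 1 (.of_forall fun x => by
      simpa [abs_mul, ← sq, abs_of_nonneg (dotProduct_self_nonneg (u x))]
        using norm_sq_le_dotProduct_self (u x))
  exact hdot.trans_isLittleO
    ((h.norm_norm.mul_isBigO (isBigO_refl _ _).norm_norm).trans_isBigO hnorm)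

theorem Matrix.IsSymm.mul_dotProduct_self_le [DecidableEq n] {H : Matrix n n ℝ} (hH : H.IsSymm)
    {t : ℝ} (ht : ∀ μ ∈ spectrum ℝ H, t ≤ μ) (x : n → ℝ) :
    t * (x ⬝ᵥ x) ≤ H *ᵥ x ⬝ᵥ x := by
  have hpsd : (H - algebraMap ℝ _ t).PosSemidef := by
    refine posSemidef_iff_isHermitian_and_spectrum_nonneg.2 ⟨?_, ?_⟩
    · exact (isHermitian_iff_isSymm.2 hH).sub (isHermitian_iff_isSymm.2 <| by
        rw [Algebra.algebraMap_eq_smul_one]; exact isSymm_one.smul t)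
    · rw [← spectrum.sub_singleton_eq]
      rintro _ ⟨μ, hμ, _, rfl, rfl⟩
      simpa using ht μ hμ
  have := hpsd.dotProduct_mulVec_nonneg x
  simp only [star_trivial, sub_mulVec, Algebra.algebraMap_eq_smul_one, smul_mulVec,
    one_mulVec] at this
  simpa [dotProduct_sub, dotProduct_comm (H *ᵥ x)] using this

end

theorem stmt_7_general (d : ℕ) (f : (Fin d → ℝ) → (Fin d → ℝ))
    (H : Matrix (Fin d) (Fin d) ℝ) (hHsymm : H.IsSymm)
    (tl : ℝ) (htl : 0 < tl)
    (htl_min : ∀ μ ∈ spectrum ℝ H, tl ≤ μ)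
    (hf : (fun x => f x - H.mulVec x) =o[nhds 0] (fun x => x))
    (a : ℝ) (ha : 1 / (2 * tl) < a) :
    ∃ C : Matrix (Fin d) (Fin d) ℝ, C.IsSymm ∧ C.PosDef ∧
      ∃ β > 1 / (2 * a), ∃ ε > 0, ∀ x : Fin d → ℝ, ‖x‖ < ε →
        β * (C.mulVec x ⬝ᵥ x) ≤ C.mulVec (f x) ⬝ᵥ x := by
  have hgap : 1 / (2 * a) < tl := by
    have ha0 : 0 < a := (by positivity : 0 < 1 / (2 * tl)).trans ha
    rw [div_lt_iff₀ (by positivity)] at ha ⊢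
    linarith
  obtain ⟨β, hβa, hβtl⟩ := exists_between hgap
  obtain ⟨ε, hε, hball⟩ := Metric.eventually_nhds_iff.1 <|
    hf.dotProduct_self.bound (sub_pos.2 hβtl)
  refine ⟨1, isSymm_one, .one, β, hβa, ε, hε, fun x hx => ?_⟩
  have hδ := hball (mem_ball_zero_iff.2 hx)
  rw [Real.norm_eq_abs, Real.norm_eq_abs, abs_of_nonneg (dotProduct_self_nonneg x)] at hδ
  have hfx : f x ⬝ᵥ x = H *ᵥ x ⬝ᵥ x + (f x - H *ᵥ x) ⬝ᵥ x := by
    rw [sub_dotProduct]; ring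
  simp only [one_mulVec, hfx]
  linarith [hHsymm.mul_dotProduct_self_le htl_min x, neg_abs_le ((f x - H *ᵥ x) ⬝ᵥ x)]

theorem stmt_7 (d : ℕ) (f : (Fin d → ℝ) → (Fin d → ℝ))
    (H : Matrix (Fin d) (Fin d) ℝ) (hHsymm : H.IsSymm) (hHpos : H.PosDef)
    (tl : ℝ) (htl : 0 < tl) (htl_mem : tl ∈ spectrum ℝ H)
    (htl_min : ∀ μ ∈ spectrum ℝ H, tl ≤ μ)
    (hf : (fun x => f x - H.mulVec x) =o[nhds 0] (fun x => x))
    (a : ℝ) (ha : 1 / (2 * tl) < a) :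
    ∃ C : Matrix (Fin d) (Fin d) ℝ, C.IsSymm ∧ C.PosDef ∧
      ∃ β > 1 / (2 * a), ∃ ε > 0, ∀ x : Fin d → ℝ, ‖x‖ < ε →
        β * (C.mulVec x ⬝ᵥ x) ≤ C.mulVec (f x) ⬝ᵥ x :=
  stmt_7_general d f H hHsymm tl htl htl_min hf a ha
end

section
/- Define $W(y) = \int_0^y \int_0^v \frac{e^{u-v}}{\sqrt{uv}}\, du\, dv$ for $y \ge 0$. Then there exists a constant $c > 0$ such that $W(y) < \ln(1+y) + c$ for all $y \ge 0$. -/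
/-!
Bounding `e^{u-v} ≤ 1` gives `∫₀ᵛ e^{u-v}/√(uv) du ≤ 2` for every `v`. For large `v` the inner
integral is `1/v + O(v⁻²)`: on `[0, v/2]` the factor `e^{u-v} ≤ e^{-v/2}` kills everything, and on
`[v/2, v]` one has `1/√(uv) ≤ 1/v + (v-u)/v²`, which integrates against `e^{u-v}` explicitly.
Together the inner integral is dominated by `1/(1+v) + 8/(1+v)² + 2e^{-v/2}`, whose integral over
`[0, y]` is `log (1+y) + O(1)`.
-/

open Real Set intervalIntegral

/-- If `f` is not integrable its integral is `0`, and `g' ≥ f ≥ 0` still makes `g` monotone. -/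
theorem integral_le_sub_of_nonneg_of_le_deriv {f g g' : ℝ → ℝ} {a b : ℝ} (hab : a ≤ b)
    (hcont : ContinuousOn g (Icc a b)) (hderiv : ∀ x ∈ Ioo a b, HasDerivWithinAt g (g' x) (Ioi x) x)
    (hf : ∀ x ∈ Ioo a b, 0 ≤ f x) (hfg : ∀ x ∈ Ioo a b, f x ≤ g' x) :
    ∫ x in a..b, f x ≤ g b - g a := by
  by_cases hint : IntervalIntegrable f MeasureTheory.volume a b
  · exact integral_le_sub_of_hasDeriv_right_of_le hab hcont hderiv
      ((intervalIntegrable_iff_integrableOn_Icc_of_le hab).1 hint) hfg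
  · rw [integral_undef hint]
    simpa using integral_le_sub_of_hasDeriv_right_of_le (φ := 0) hab hcont hderiv
      MeasureTheory.integrableOn_zero fun x hx => (hf x hx).trans (hfg x hx)

theorem integral_exp_sub_div_sqrt_le {b v : ℝ} (hb : 0 ≤ b) (hbv : b ≤ v) :
    ∫ u in (0 : ℝ)..b, exp (u - v) / √(u * v) ≤ 2 * exp (b - v) := by
  rcases hb.eq_or_lt with rfl | hb
  · simp [(exp_pos _).le]
  have hv : 0 < v := hb.trans_le hbv
  calc ∫ u in (0 : ℝ)..b, exp (u - v) / √(u * v)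
      ≤ 2 * exp (b - v) * √b / √v - 2 * exp (b - v) * √0 / √v := by
        refine integral_le_sub_of_nonneg_of_le_deriv (g := fun u => 2 * exp (b - v) * √u / √v)
          (g' := fun u => exp (b - v) / (√u * √v))
          hb.le (by fun_prop) (fun u hu => ?_) (fun u _ => by positivity) (fun u hu => ?_)
        · have := ((hasDerivAt_sqrt hu.1.ne').const_mul (2 * exp (b - v))).div_const √v
          refine (this.congr_deriv ?_).hasDerivWithinAt
          field_simp
        · rw [sqrt_mul hu.1.le]
          gcongr
          linarith [hu.2]
    _ ≤ 2 * exp (b - v) := by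
        rw [sqrt_zero, mul_zero, zero_div, sub_zero, mul_div_assoc]
        refine mul_le_of_le_one_right (by positivity) ?_
        exact div_le_one_of_le₀ (sqrt_le_sqrt hbv) (sqrt_nonneg v)

theorem one_div_sqrt_mul_le {u v : ℝ} (hv : 0 < v) (hu : v / 2 ≤ u) (huv : u ≤ v) :
    1 / √(u * v) ≤ 1 / v + (v - u) / v ^ 2 := by
  have hu0 : 0 < u := by linarith
  have hs : 0 < √(u * v) := sqrt_pos.2 (by positivity)
  have hss : √(u * v) ^ 2 = u * v := sq_sqrt (by positivity)
  have hus : u ≤ √(u * v) := le_sqrt_of_sq_le (by nlinarith)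
  have hsv : √(u * v) ≤ v := (sqrt_le_left hv.le).2 (by nlinarith)
  have harmonic_le_geometric : 2 * u * v ≤ √(u * v) * (u + v) := by
    nlinarith [mul_nonneg (sub_nonneg.2 hus) (sub_nonneg.2 hsv)]
  rw [div_add_div _ _ hv.ne' (by positivity), div_le_div_iff₀ hs (by positivity)]
  nlinarith [mul_nonneg (by linarith : (0 : ℝ) ≤ 2 * u - v) (by linarith : (0 : ℝ) ≤ v - u)]

theorem integral_exp_sub_div_sqrt_upper_half_le {v : ℝ} (hv : 0 < v) :
    ∫ u in v / 2..v, exp (u - v) / √(u * v) ≤ 1 / v + 1 / v ^ 2 := by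
  set F : ℝ → ℝ := fun u => exp (u - v) * (1 / v + (v - u + 1) / v ^ 2)
  calc ∫ u in v / 2..v, exp (u - v) / √(u * v) ≤ F v - F (v / 2) := by
        refine integral_le_sub_of_nonneg_of_le_deriv
          (g' := fun u => exp (u - v) * (1 / v + (v - u) / v ^ 2))
          (by linarith) (by fun_prop) (fun u _ => ?_) (fun u _ => by positivity) (fun u hu => ?_)
        · have := ((hasDerivAt_id u).sub_const v).exp.mul
            ((((hasDerivAt_id u).const_sub v).add_const 1).div_const (v ^ 2) |>.const_add (1 / v))
          refine (this.congr_deriv ?_).hasDerivWithinAt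
          simp only [id]
          field_simp
          ring
        · rw [div_eq_mul_one_div (exp _)]
          gcongr
          exact one_div_sqrt_mul_le hv hu.1.le hu.2.le
    _ ≤ 1 / v + 1 / v ^ 2 := by
        have : 0 ≤ F (v / 2) := by
          have : 0 ≤ v - v / 2 + 1 := by linarith
          positivity
        simp only [F, sub_self, exp_zero, one_mul] at this ⊢
        linarith

noncomputable def innerW (v : ℝ) : ℝ := ∫ u in (0 : ℝ)..v, exp (u - v) / √(u * v)

theorem innerW_nonneg {v : ℝ} (hv : 0 ≤ v) : 0 ≤ innerW v :=
  integral_nonneg hv fun _ _ => by positivity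

theorem innerW_le_two {v : ℝ} (hv : 0 ≤ v) : innerW v ≤ 2 := by
  simpa [innerW] using integral_exp_sub_div_sqrt_le hv le_rfl

theorem innerW_le_of_pos {v : ℝ} (hv : 0 < v) :
    innerW v ≤ 1 / v + 1 / v ^ 2 + 2 * exp (-(v / 2)) := by
  by_cases hint : IntervalIntegrable (fun u => exp (u - v) / √(u * v)) MeasureTheory.volume 0 v
  swap
  · rw [innerW, integral_undef hint]; positivity
  have hmem : v / 2 ∈ uIcc 0 v := by rw [uIcc_of_le hv.le]; constructor <;> linarith
  rw [innerW, ← integral_add_adjacent_intervals (hint.mono_set (uIcc_subset_uIcc_left hmem))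
    (hint.mono_set (uIcc_subset_uIcc_right hmem))]
  have hhead := integral_exp_sub_div_sqrt_le (by linarith : 0 ≤ v / 2) (by linarith : v / 2 ≤ v)
  rw [show v / 2 - v = -(v / 2) by ring] at hhead
  linarith [integral_exp_sub_div_sqrt_upper_half_le hv]

/-- The right-hand side is the derivative of `log (1 + v) - 8 / (1 + v) - 4 * exp (-(v / 2))`. -/
theorem innerW_le {v : ℝ} (hv : 0 < v) :
    innerW v ≤ 1 / (1 + v) + 8 / (1 + v) ^ 2 + 2 * exp (-(v / 2)) := by
  have hexp := (exp_pos (-(v / 2))).le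
  rcases le_or_gt v 1 with hv1 | hv1
  · have : 2 ≤ 8 / (1 + v) ^ 2 := by rw [le_div_iff₀ (by positivity)]; nlinarith
    linarith [innerW_le_two hv.le, one_div_pos.2 (by linarith : 0 < 1 + v)]
  · have : 1 / v + 1 / v ^ 2 ≤ 1 / (1 + v) + 8 / (1 + v) ^ 2 := by
      rw [div_add_div _ _ (by positivity) (by positivity),
        div_add_div _ _ (by positivity) (by positivity),
        div_le_div_iff₀ (by positivity) (by positivity)]
      nlinarith [pow_pos hv 3, pow_pos hv 4]
    linarith [innerW_le_of_pos hv]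

theorem stmt_12 :
    ∃ c > 0, ∀ y : ℝ, 0 ≤ y →
      (∫ v in (0 : ℝ)..y, ∫ u in (0 : ℝ)..v, Real.exp (u - v) / Real.sqrt (u * v)) <
        Real.log (1 + y) + c := by
  refine ⟨13, by norm_num, fun y hy => ?_⟩
  set G : ℝ → ℝ := fun v => log (1 + v) - 8 / (1 + v) - 4 * exp (-(v / 2))
  have hG : ∀ v, 0 ≤ v →
      HasDerivAt G (1 / (1 + v) + 8 / (1 + v) ^ 2 + 2 * exp (-(v / 2))) v := by
    intro v hv
    have h1 : 1 + v ≠ 0 := by positivity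
    have := (((hasDerivAt_id v).const_add 1).log h1).sub
      ((((hasDerivAt_id v).const_add 1).inv h1).const_mul 8) |>.sub
      ((((hasDerivAt_id v).div_const 2).neg.exp).const_mul 4)
    refine this.congr_deriv ?_
    simp only [id, Pi.neg_apply]
    field_simp
    ring
  have hW : ∫ v in (0 : ℝ)..y, innerW v ≤ G y - G 0 :=
    integral_le_sub_of_nonneg_of_le_deriv hy
      (fun v hv => (hG v hv.1).continuousAt.continuousWithinAt)
      (fun v hv => (hG v hv.1.le).hasDerivWithinAt)
      (fun v hv => innerW_nonneg hv.1.le) (fun v hv => innerW_le hv.1)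
  have hG_le : G y - G 0 ≤ log (1 + y) + 12 := by
    have : 0 ≤ 8 / (1 + y) := by positivity
    simp only [G, add_zero, log_one, div_one, zero_div, neg_zero, exp_zero]
    linarith [(exp_pos (-(y / 2))).le]
  exact (hW.trans hG_le).trans_lt (by linarith)
end
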